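/- arXiv:2209.08913 — 2 statements merged into one kernel-verified Lean document; each statement's English description precedes it below -/
import Mathlib

section
/- Let l ≥ 0 be an integer, y > 0 and σ > 1/2. Then ψ_l(y) = (1/(2π·l!)) ∫_{−∞}^{∞} π^{−(σ+iτ)} · ζ(2(σ+iτ)) · Γ(l+σ+iτ) · y^{σ+iτ} dτ, the integral being absolutely convergent. -/
open MeasureTheory

/-- `ψ_l(y) = (1/l!) ∑_{m=1}^{∞} e^{−πm²/y} (πm²/y)^l`. -/
noncomputable def psiT (l : ℕ) (y : ℝ) : ℝ :=
  (1 / (l.factorial : ℝ)) *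
    ∑' m : ℕ, Real.exp (-Real.pi * ((m : ℝ) + 1) ^ 2 / y) * (Real.pi * ((m : ℝ) + 1) ^ 2 / y) ^ l

/-!
Mellin inversion of `Γ(s + l) = ∫₀^∞ x^(s+l-1) e^(-x) dx` on the line `Re s = σ > 0` writes each
term `x^l e^(-x)` of `ψ_l(y)`, `x = π m² / y`, as `(2π)⁻¹ ∫ x^(-s) Γ(l + s) dτ`. For `σ > 1/2` the
Dirichlet series `∑ₘ (π m² / y)^(-s) = π^(-s) ζ(2s) y^s` converges absolutely and uniformly on
the line, and `Γ` decays like `(1 + τ²)⁻¹` along vertical lines, so the sum over `m` and the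
integral over `τ` can be interchanged.
-/

namespace Complex

lemma norm_Gamma_le_Gamma_re {z : ℂ} (hz : 0 < z.re) : ‖Gamma z‖ ≤ Real.Gamma z.re := by
  rw [Gamma_eq_integral hz, Real.Gamma_eq_integral hz, GammaIntegral]
  refine (norm_integral_le_integral_norm _).trans_eq <|
    setIntegral_congr_fun measurableSet_Ioi fun x hx => ?_
  rw [norm_mul, norm_cpow_eq_rpow_re_of_pos hx, norm_real, Real.norm_of_nonneg (Real.exp_pos _).le]
  simp

lemma norm_sq_le_norm_mul_add_one {z : ℂ} (hz : 0 ≤ z.re) : ‖z‖ ^ 2 ≤ ‖z * (z + 1)‖ := by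
  have : ‖z‖ ≤ ‖z + 1‖ := by
    rw [← sq_le_sq₀ (norm_nonneg _) (norm_nonneg _), ← normSq_eq_norm_sq, ← normSq_eq_norm_sq,
      normSq_add, normSq_one]
    simp only [map_one, mul_one]
    linarith
  rw [norm_mul, sq]
  exact mul_le_mul_of_nonneg_left this (norm_nonneg _)

lemma norm_Gamma_ofReal_add_mul_I_le {a : ℝ} (ha : 0 < a) (τ : ℝ) :
    ‖Gamma (a + τ * I)‖ ≤ Real.Gamma (a + 2) / min (a ^ 2) 1 * (1 + τ ^ 2)⁻¹ := by
  set z : ℂ := a + τ * I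
  have hz : z.re = a := by simp [z]
  have hz0 : z ≠ 0 := fun h => by simp only [h, zero_re] at hz; linarith
  have hz1 : z + 1 ≠ 0 := fun h => by
    have := congrArg re h; simp only [add_re, hz, one_re, zero_re] at this; linarith
  -- Two steps of `Γ(s + 1) = s Γ(s)` buy the decay `|z (z + 1)|⁻¹ ≍ (1 + τ²)⁻¹`.
  have hshift : Gamma z = Gamma (z + 2) / (z * (z + 1)) := by
    rw [show z + 2 = z + 1 + 1 by ring, Gamma_add_one _ hz1, Gamma_add_one _ hz0]
    field_simp
  have hnum : ‖Gamma (z + 2)‖ ≤ Real.Gamma (a + 2) := by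
    simpa [hz] using norm_Gamma_le_Gamma_re (z := z + 2) (by simp [hz]; linarith)
  have hden : min (a ^ 2) 1 * (1 + τ ^ 2) ≤ ‖z * (z + 1)‖ := by
    have hnorm : ‖z‖ ^ 2 = a ^ 2 + τ ^ 2 := by
      rw [← normSq_eq_norm_sq, normSq_add_mul_I]
    have := norm_sq_le_norm_mul_add_one (z := z) (by rw [hz]; exact ha.le)
    nlinarith [min_le_left (a ^ 2) 1, min_le_right (a ^ 2) 1, sq_nonneg τ]
  have hpos : 0 < min (a ^ 2) 1 * (1 + τ ^ 2) := by positivity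
  rw [hshift, norm_div]
  exact (div_le_div₀ (Real.Gamma_pos_of_pos (by linarith)).le hnum hpos hden).trans_eq
    (by rw [← div_div, div_eq_mul_inv _ (1 + τ ^ 2)])

lemma continuous_Gamma_add_mul_I {w : ℂ} (hw : 0 < w.re) :
    Continuous fun τ : ℝ => Gamma (w + τ * I) := by
  refine continuous_iff_continuousAt.mpr fun τ => ?_
  refine (differentiableAt_Gamma _ fun m h => ?_).continuousAt.comp (by fun_prop)
  have := congrArg re h
  simp only [add_re, mul_I_re, ofReal_im, neg_zero, add_zero, neg_re, natCast_re] at this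
  linarith [(m.cast_nonneg : (0 : ℝ) ≤ m)]

lemma integrable_Gamma_add_mul_I {w : ℂ} (hw : 0 < w.re) :
    Integrable fun τ : ℝ => Gamma (w + τ * I) := by
  have hreal : Integrable fun τ : ℝ => Gamma (w.re + τ * I) :=
    (integrable_inv_one_add_sq.const_mul _).mono'
      (continuous_Gamma_add_mul_I (by simpa)).aestronglyMeasurable
      (.of_forall (norm_Gamma_ofReal_add_mul_I_le hw))
  refine (hreal.comp_add_right w.im).congr (.of_forall fun τ => ?_)
  dsimp only
  congr 1
  apply Complex.ext <;> simp [add_comm]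

lemma mellinConvergent_exp_neg {s : ℂ} (hs : 0 < s.re) :
    MellinConvergent (fun x : ℝ => (Real.exp (-x) : ℂ)) s := by
  simpa only [MellinConvergent, smul_eq_mul, mul_comm] using GammaIntegral_convergent hs

lemma mellin_exp_neg {s : ℂ} (hs : 0 < s.re) :
    mellin (fun x : ℝ => (Real.exp (-x) : ℂ)) s = Gamma s := by
  rw [← GammaIntegral_eq_mellin, Gamma_eq_integral hs]

lemma mellinInv_Gamma_add_natCast (l : ℕ) {σ : ℝ} (hσ : 0 < σ) {x : ℝ} (hx : 0 < x) :
    mellinInv σ (fun s => Gamma (l + s)) x = (Real.exp (-x) * x ^ l : ℝ) := by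
  set f : ℝ → ℂ := fun t => (t : ℂ) ^ (l : ℂ) • (Real.exp (-t) : ℂ)
  have hre (τ : ℝ) : 0 < ((σ : ℂ) + τ * I + l).re := by
    simp only [add_re, mul_I_re, ofReal_re, ofReal_im, natCast_re, neg_zero, add_zero]
    positivity
  have hmellin (τ : ℝ) : mellin f (σ + τ * I) = Gamma (l + (σ + τ * I)) := by
    rw [mellin_cpow_smul, mellin_exp_neg (hre τ), add_comm]
  have hconv : MellinConvergent f σ :=
    MellinConvergent.cpow_smul.mpr (mellinConvergent_exp_neg (by simpa using hre 0))
  have hvert : VerticalIntegrable (mellin f) σ := by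
    refine (integrable_Gamma_add_mul_I (w := l + σ) ?_).congr (.of_forall fun τ => ?_)
    · simp only [add_re, natCast_re, ofReal_re]
      positivity
    · simp only [hmellin, add_assoc]
  have hf : f = fun t : ℝ => (t : ℂ) ^ l * (Real.exp (-t) : ℂ) := by
    simp only [f, cpow_natCast, smul_eq_mul]
  have hcont : ContinuousAt f x := by rw [hf]; fun_prop
  have hinv := mellinInv_mellin_eq σ f hx hconv hvert hcont
  simp only [mellinInv, hmellin] at hinv
  simp only [mellinInv, hinv, hf]
  push_cast
  ring

lemma ofReal_pi_mul_sq_div_cpow_neg (n : ℕ) {y : ℝ} (hy : 0 ≤ y) (s : ℂ) :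
    ((Real.pi * n ^ 2 / y : ℝ) : ℂ) ^ (-s) = Real.pi ^ (-s) * y ^ s * (1 / (n : ℂ) ^ (2 * s)) := by
  rw [ofReal_div, div_cpow_ofReal_nonneg (by positivity) hy, ofReal_mul,
    mul_cpow_ofReal_nonneg Real.pi_pos.le (by positivity), ofReal_pow, ofReal_natCast,
    ← natCast_cpow_natCast_mul, Nat.cast_ofNat, mul_neg, cpow_neg _ (2 * s), cpow_neg (y : ℂ)]
  field_simp

lemma hasSum_ofReal_pi_mul_sq_div_cpow_neg {y : ℝ} (hy : 0 ≤ y) {s : ℂ} (hs : 1 / 2 < s.re) :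
    HasSum (fun m : ℕ => ((Real.pi * ((m : ℝ) + 1) ^ 2 / y : ℝ) : ℂ) ^ (-s))
      (Real.pi ^ (-s) * riemannZeta (2 * s) * y ^ s) := by
  have h2s : 1 < (2 * s).re := by
    simp only [mul_re, re_ofNat, im_ofNat, zero_mul, sub_zero]; linarith
  have hzeta : HasSum (fun m : ℕ => 1 / ((m + 1 : ℕ) : ℂ) ^ (2 * s)) (riemannZeta (2 * s)) := by
    rw [zeta_eq_tsum_one_div_nat_add_one_cpow h2s]
    exact_mod_cast ((summable_nat_add_iff 1).mpr (summable_one_div_nat_cpow.mpr h2s)).hasSum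
  rw [mul_right_comm]
  refine (hzeta.mul_left ((Real.pi : ℂ) ^ (-s) * (y : ℂ) ^ s)).congr_fun fun m => ?_
  rw [← ofReal_pi_mul_sq_div_cpow_neg _ hy]
  push_cast
  rfl

lemma norm_ofReal_cpow_neg {x : ℝ} (hx : 0 < x) (σ τ : ℝ) :
    ‖(x : ℂ) ^ (-(σ + τ * I))‖ = x ^ (-σ) := by
  rw [norm_cpow_eq_rpow_re_of_pos hx]
  simp

lemma continuous_ofReal_cpow_neg {x : ℝ} (hx : 0 < x) (σ : ℝ) :
    Continuous fun τ : ℝ => (x : ℂ) ^ (-(σ + τ * I)) :=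
  Continuous.const_cpow (by fun_prop) (.inl (ofReal_ne_zero.mpr hx.ne'))

end Complex

open Complex

section VerticalLine

variable {σ : ℝ} {x : ℕ → ℝ} {g : ℝ → ℂ}

lemma integrable_tsum_ofReal_cpow_neg_mul (hx : ∀ m, 0 < x m)
    (hsum : Summable fun m => x m ^ (-σ)) (hg : Integrable g) :
    Integrable fun τ : ℝ => ∑' m, (x m : ℂ) ^ (-(σ + τ * I)) * g τ := by
  simp_rw [tsum_mul_right]
  have hbound (τ : ℝ) : ‖∑' m, (x m : ℂ) ^ (-(σ + τ * I))‖ ≤ ∑' m, x m ^ (-σ) := by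
    simp_rw [← norm_ofReal_cpow_neg (hx _) σ τ] at hsum ⊢
    exact norm_tsum_le_tsum_norm hsum
  have hcont : Continuous fun τ : ℝ => ∑' m, (x m : ℂ) ^ (-(σ + τ * I)) :=
    continuous_tsum (fun m => continuous_ofReal_cpow_neg (hx m) σ) hsum
      fun m τ => (norm_ofReal_cpow_neg (hx m) σ τ).le
  exact hg.bdd_mul hcont.aestronglyMeasurable (.of_forall hbound)

lemma tsum_integral_ofReal_cpow_neg_mul (hx : ∀ m, 0 < x m)
    (hsum : Summable fun m => x m ^ (-σ)) (hg : Integrable g) :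
    ∑' m, ∫ τ : ℝ, (x m : ℂ) ^ (-(σ + τ * I)) * g τ =
      ∫ τ : ℝ, ∑' m, (x m : ℂ) ^ (-(σ + τ * I)) * g τ := by
  have hint (m : ℕ) : Integrable fun τ : ℝ => (x m : ℂ) ^ (-(σ + τ * I)) * g τ :=
    hg.bdd_mul (continuous_ofReal_cpow_neg (hx m) σ).aestronglyMeasurable
      (.of_forall fun τ => (norm_ofReal_cpow_neg (hx m) σ τ).le)
  refine integral_tsum_of_summable_integral_norm hint ?_
  simp_rw [norm_mul, norm_ofReal_cpow_neg (hx _), integral_const_mul]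
  exact hsum.mul_right _

end VerticalLine

lemma ofReal_psiT_eq_tsum_integral (l : ℕ) {y : ℝ} (hy : 0 < y) {σ : ℝ} (hσ : 0 < σ) :
    (psiT l y : ℂ) = 1 / (2 * Real.pi * l.factorial) * ∑' m : ℕ, ∫ τ : ℝ,
      ((Real.pi * ((m : ℝ) + 1) ^ 2 / y : ℝ) : ℂ) ^ (-(σ + τ * I)) * Gamma (l + σ + τ * I) := by
  have hx (m : ℕ) : 0 < Real.pi * ((m : ℝ) + 1) ^ 2 / y := by positivity
  have hinv := fun m => mellinInv_Gamma_add_natCast l hσ (hx m)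
  simp only [mellinInv, smul_eq_mul, ← add_assoc] at hinv
  rw [psiT, ofReal_mul, ofReal_tsum]
  simp only [neg_mul, neg_div, ← hinv, real_smul, tsum_mul_left]
  push_cast
  ring

lemma tsum_ofReal_pi_mul_sq_div_cpow_neg_mul (l : ℕ) {y : ℝ} (hy : 0 ≤ y) {σ : ℝ}
    (hσ : 1 / 2 < σ) (τ : ℝ) :
    ∑' m : ℕ, ((Real.pi * ((m : ℝ) + 1) ^ 2 / y : ℝ) : ℂ) ^ (-(σ + τ * I)) *
        Gamma (l + σ + τ * I) =
      Real.pi ^ (-(σ + τ * I)) * riemannZeta (2 * (σ + τ * I)) * Gamma (l + σ + τ * I) *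
        y ^ (σ + τ * I) := by
  rw [tsum_mul_right, (hasSum_ofReal_pi_mul_sq_div_cpow_neg hy
    (by simpa [one_div] using hσ)).tsum_eq]
  ring

/-- For integer `l ≥ 0`, `y > 0` and `σ > 1/2`:
`ψ_l(y) = (1/(2π l!)) ∫_ℝ π^{−(σ+iτ)} ζ(2(σ+iτ)) Γ(l+σ+iτ) y^{σ+iτ} dτ`,
the integral being absolutely convergent. -/
theorem stmt6 (l : ℕ) (y : ℝ) (hy : 0 < y) (σ : ℝ) (hσ : 1/2 < σ) :
    Integrable (fun τ : ℝ =>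
      (Real.pi : ℂ) ^ (-((σ : ℂ) + (τ : ℂ) * Complex.I)) *
        riemannZeta (2 * ((σ : ℂ) + (τ : ℂ) * Complex.I)) *
        Complex.Gamma ((l : ℂ) + (σ : ℂ) + (τ : ℂ) * Complex.I) *
        (y : ℂ) ^ ((σ : ℂ) + (τ : ℂ) * Complex.I)) ∧
    ((psiT l y : ℝ) : ℂ) = (1 / (2 * (Real.pi : ℂ) * (l.factorial : ℂ))) *
      ∫ τ : ℝ, (Real.pi : ℂ) ^ (-((σ : ℂ) + (τ : ℂ) * Complex.I)) *
        riemannZeta (2 * ((σ : ℂ) + (τ : ℂ) * Complex.I)) *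
        Complex.Gamma ((l : ℂ) + (σ : ℂ) + (τ : ℂ) * Complex.I) *
        (y : ℂ) ^ ((σ : ℂ) + (τ : ℂ) * Complex.I) := by
  have hx (m : ℕ) : 0 < Real.pi * ((m : ℝ) + 1) ^ 2 / y := by positivity
  have hsum : Summable fun m : ℕ => (Real.pi * ((m : ℝ) + 1) ^ 2 / y) ^ (-σ) := by
    refine (hasSum_ofReal_pi_mul_sq_div_cpow_neg hy.le (s := σ)
      (by simpa [one_div] using hσ)).summable.norm.congr fun m => ?_
    rw [norm_cpow_eq_rpow_re_of_pos (hx m), neg_re, ofReal_re]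
  have hΓ := integrable_Gamma_add_mul_I (w := l + σ)
    (by simp only [add_re, natCast_re, ofReal_re]; positivity)
  simp only [← tsum_ofReal_pi_mul_sq_div_cpow_neg_mul l hy.le hσ]
  refine ⟨integrable_tsum_ofReal_cpow_neg_mul hx hsum hΓ, ?_⟩
  rw [ofReal_psiT_eq_tsum_integral l hy (by linarith), tsum_integral_ofReal_cpow_neg_mul hx hsum hΓ]
end

section
/- For z, w in the upper half-plane H define H(z,w) = i^{1/2} · (|z − conj(w)| / (z − conj(w)))^{1/2}, with complex square roots taken in the principal branch. Then for every T ∈ SL(2, ℝ) and all z, w ∈ H: H(Tz, Tw)/H(z,w) = (j_T(z)/|j_T(z)|)^{1/2} · (j_T(w)/|j_T(w)|)^{−1/2}. -/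
/-- The point-pair invariant `H(z,w) = i^{1/2} (|z − w̄|/(z − w̄))^{1/2}`
(principal branches). -/
noncomputable def Hker (z w : ℂ) : ℂ :=
  Complex.I ^ ((1 : ℂ)/2) *
    (((‖z - (starRingEnd ℂ) w‖ : ℝ) : ℂ) / (z - (starRingEnd ℂ) w)) ^ ((1 : ℂ)/2)

/-- The Möbius action of `T ∈ SL(2,ℝ)` on the upper half-plane. -/
noncomputable def mobSL (T : Matrix.SpecialLinearGroup (Fin 2) ℝ) (z : ℂ) : ℂ :=
  ((T.1 0 0 : ℝ) * z + (T.1 0 1 : ℝ)) / ((T.1 1 0 : ℝ) * z + (T.1 1 1 : ℝ))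

/-- The automorphy factor `j_T(z) = c z + d` for `T = (a, b; c, d) ∈ SL(2,ℝ)`. -/
noncomputable def jSL (T : Matrix.SpecialLinearGroup (Fin 2) ℝ) (z : ℂ) : ℂ :=
  (T.1 1 0 : ℝ) * z + (T.1 1 1 : ℝ)

/-!
On the unit circle the principal power is `x ^ s = exp (i s arg x)`, so both sides are exponentials
and the claim reduces to `arg (Tz - conj (Tw)) = arg (z - conj w) - arg j_T(z) + arg j_T(w)`.
The identity `Tz - conj (Tw) = (z - conj w) / (j_T(z) conj (j_T(w)))` gives this modulo `2π`, and it
holds exactly because both arguments `arg (Tz - conj (Tw))`, `arg (z - conj w)` lie in `(0, π)` while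
`j_T(z)`, `j_T(w)` lie in the same open half-plane (or coincide), so the two sides differ by less
than `2π`.
-/

open Complex ComplexConjugate Real

namespace Complex

lemma cpow_eq_exp_arg_of_norm_eq_one {x : ℂ} (hx : ‖x‖ = 1) (s : ℂ) :
    x ^ s = exp (arg x * I * s) := by
  rw [cpow_def_of_ne_zero (norm_ne_zero_iff.mp (hx ▸ one_ne_zero)), log, hx, Real.log_one,
    ofReal_zero, zero_add]

lemma cpow_div_ofReal_norm {v : ℂ} (hv : v ≠ 0) (s : ℂ) :
    (v / (‖v‖ : ℂ)) ^ s = exp (arg v * I * s) := by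
  have hnorm : 0 < ‖v‖ := norm_pos_iff.mpr hv
  rw [cpow_eq_exp_arg_of_norm_eq_one (by simp [hnorm.ne']), div_eq_mul_inv, ← ofReal_inv,
    arg_mul_real (inv_pos.mpr hnorm)]

lemma cpow_ofReal_norm_div {v : ℂ} (hv : v ∈ slitPlane) (s : ℂ) :
    ((‖v‖ : ℂ) / v) ^ s = exp (-arg v * I * s) := by
  have hnorm : 0 < ‖v‖ := norm_pos_iff.mpr (slitPlane_ne_zero hv)
  rw [cpow_eq_exp_arg_of_norm_eq_one (by simp [hnorm.ne']), div_eq_mul_inv,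
    arg_real_mul _ hnorm, arg_inv, if_neg (slitPlane_arg_ne_pi hv), ofReal_neg]

lemma im_sub_conj (z w : ℂ) : (z - conj w).im = z.im + w.im := by
  rw [sub_im, conj_im, sub_neg_eq_add]

lemma arg_mem_Ioo_of_im_pos {z : ℂ} (hz : 0 < z.im) : arg z ∈ Set.Ioo 0 π :=
  ⟨(arg_nonneg_iff.mpr hz.le).lt_of_ne fun h => hz.ne' (arg_eq_zero_iff.mp h.symm).2,
    arg_lt_pi_iff.mpr (Or.inr hz.ne')⟩

lemma abs_arg_sub_arg_lt_pi {x y : ℂ} (h : 0 < x.im * y.im) : |arg x - arg y| < π := by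
  rcases pos_and_pos_or_neg_and_neg_of_mul_pos h with ⟨hx, hy⟩ | ⟨hx, hy⟩
  · obtain ⟨hx₀, hxπ⟩ := arg_mem_Ioo_of_im_pos hx
    obtain ⟨hy₀, hyπ⟩ := arg_mem_Ioo_of_im_pos hy
    exact abs_sub_lt_iff.mpr ⟨by linarith, by linarith⟩
  · have hx₀ := arg_neg_iff.mpr hx
    have hy₀ := arg_neg_iff.mpr hy
    have hxπ := neg_pi_lt_arg x
    have hyπ := neg_pi_lt_arg y
    exact abs_sub_lt_iff.mpr ⟨by linarith, by linarith⟩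

end Complex

lemma Real.Angle.eq_of_coe_eq_of_abs_sub_lt {a b : ℝ} (h : (a : Real.Angle) = b)
    (hab : |a - b| < 2 * π) : a = b := by
  obtain ⟨k, hk⟩ := Real.Angle.angle_eq_iff_two_pi_dvd_sub.mp h
  rw [hk, abs_mul, abs_of_pos two_pi_pos, mul_lt_iff_lt_one_right two_pi_pos] at hab
  rw [← Int.cast_abs, ← Int.cast_one, Int.cast_lt, Int.abs_lt_one_iff] at hab
  simpa [hab, sub_eq_zero] using hk

lemma Hker_eq_exp {z w : ℂ} (h : z - conj w ∈ slitPlane) :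
    Hker z w = exp ((π / 2 - arg (z - conj w)) * I / 2) := by
  rw [Hker, cpow_eq_exp_arg_of_norm_eq_one norm_I, arg_I, cpow_ofReal_norm_div h,
    ← Complex.exp_add]
  congr 1
  push_cast
  ring

section SL2

variable (T : Matrix.SpecialLinearGroup (Fin 2) ℝ)

lemma Matrix.SpecialLinearGroup.fin_two_det_eq_one : T 0 0 * T 1 1 - T 0 1 * T 1 0 = 1 :=
  (T.det_coe ▸ Matrix.det_fin_two T.1).symm

lemma jSL_im (z : ℂ) : (jSL T z).im = T 1 0 * z.im := by
  simp [jSL]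

lemma jSL_ne_zero {z : ℂ} (hz : z.im ≠ 0) : jSL T z ≠ 0 := by
  intro h
  have hc : T 1 0 = 0 := by
    simpa [hz] using (jSL_im T z).symm.trans (congrArg im h)
  have hd : T 1 1 = 0 := by simpa [jSL, hc] using congrArg re h
  simpa [hc, hd] using T.fin_two_det_eq_one

lemma conj_jSL (z : ℂ) : conj (jSL T z) = jSL T (conj z) := by
  simp [jSL]

lemma conj_mobSL (z : ℂ) : conj (mobSL T z) = mobSL T (conj z) := by
  simp [mobSL]

lemma mobSL_sub_mobSL {z w : ℂ} (hz : jSL T z ≠ 0) (hw : jSL T w ≠ 0) :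
    mobSL T z - mobSL T w = (z - w) / (jSL T z * jSL T w) := by
  have hdet : (T 0 0 * T 1 1 - T 0 1 * T 1 0 : ℂ) = 1 := by
    exact_mod_cast T.fin_two_det_eq_one
  unfold jSL at hz hw ⊢
  rw [mobSL, mobSL, div_sub_div _ _ hz hw]
  congr 1
  linear_combination (z - w) * hdet

lemma im_mobSL (z : ℂ) : (mobSL T z).im = z.im / normSq (jSL T z) := by
  rw [mobSL, div_im, ← sub_div]
  simp only [jSL, add_re, add_im, mul_re, mul_im, ofReal_re, ofReal_im]
  congr 1
  linear_combination z.im * T.fin_two_det_eq_one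

lemma im_mobSL_pos {z : ℂ} (hz : 0 < z.im) : 0 < (mobSL T z).im := by
  rw [im_mobSL]
  exact div_pos hz (normSq_pos.mpr (jSL_ne_zero T hz.ne'))

lemma abs_arg_jSL_sub_arg_jSL_lt_pi {z w : ℂ} (hz : 0 < z.im) (hw : 0 < w.im) :
    |arg (jSL T z) - arg (jSL T w)| < π := by
  rcases eq_or_ne (T 1 0) 0 with hc | hc
  · have : jSL T z = jSL T w := by simp [jSL, hc]
    simp [this, pi_pos]
  · apply abs_arg_sub_arg_lt_pi
    rw [jSL_im, jSL_im]
    nlinarith [mul_pos (mul_self_pos.mpr hc) (mul_pos hz hw)]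

lemma arg_mobSL_sub_conj_mobSL {z w : ℂ} (hz : 0 < z.im) (hw : 0 < w.im) :
    arg (mobSL T z - conj (mobSL T w)) = arg (z - conj w) - arg (jSL T z) + arg (jSL T w) := by
  have hjz := jSL_ne_zero T hz.ne'
  have hjw := jSL_ne_zero T hw.ne'
  have hu : 0 < (z - conj w).im := by rw [im_sub_conj]; positivity
  have hu' : 0 < (mobSL T z - conj (mobSL T w)).im := by
    rw [im_sub_conj]; exact add_pos (im_mobSL_pos T hz) (im_mobSL_pos T hw)
  have key : mobSL T z - conj (mobSL T w) = (z - conj w) / (jSL T z * conj (jSL T w)) := by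
    rw [conj_mobSL, conj_jSL, mobSL_sub_mobSL T hjz (by rwa [← conj_jSL, map_ne_zero])]
  apply Real.Angle.eq_of_coe_eq_of_abs_sub_lt
  · rw [key, arg_div_coe_angle (ne_of_apply_ne im hu.ne') (mul_ne_zero hjz (by simpa)),
      arg_mul_coe_angle hjz (by simpa), arg_conj_coe_angle, Real.Angle.coe_add, Real.Angle.coe_sub]
    abel
  · obtain ⟨h₁, h₂⟩ := arg_mem_Ioo_of_im_pos hu
    obtain ⟨h₃, h₄⟩ := arg_mem_Ioo_of_im_pos hu'
    obtain ⟨h₅, h₆⟩ := abs_sub_lt_iff.mp (abs_arg_jSL_sub_arg_jSL_lt_pi T hz hw)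
    exact abs_sub_lt_iff.mpr ⟨by linarith, by linarith⟩

end SL2

/-- For every `T ∈ SL(2,ℝ)` and `z, w` in the upper half-plane:
`H(Tz, Tw)/H(z,w) = (j_T(z)/|j_T(z)|)^{1/2} (j_T(w)/|j_T(w)|)^{−1/2}`. -/
theorem stmt15 (T : Matrix.SpecialLinearGroup (Fin 2) ℝ) (z w : ℂ)
    (hz : 0 < z.im) (hw : 0 < w.im) :
    Hker (mobSL T z) (mobSL T w) / Hker z w =
      (jSL T z / ((‖jSL T z‖ : ℝ) : ℂ)) ^ ((1 : ℂ)/2) *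
      (jSL T w / ((‖jSL T w‖ : ℝ) : ℂ)) ^ (-(1 : ℂ)/2) := by
  have hu : 0 < (z - conj w).im := by rw [im_sub_conj]; positivity
  have hu' : 0 < (mobSL T z - conj (mobSL T w)).im := by
    rw [im_sub_conj]; exact add_pos (im_mobSL_pos T hz) (im_mobSL_pos T hw)
  rw [Hker_eq_exp (mem_slitPlane_iff.mpr (Or.inr hu'.ne')),
    Hker_eq_exp (mem_slitPlane_iff.mpr (Or.inr hu.ne')),
    cpow_div_ofReal_norm (jSL_ne_zero T hz.ne'), cpow_div_ofReal_norm (jSL_ne_zero T hw.ne'),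
    ← Complex.exp_sub, ← Complex.exp_add, arg_mobSL_sub_conj_mobSL T hz hw]
  congr 1
  push_cast
  ring
end
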